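/- arXiv:1807.08837 — 6 statements merged into one kernel-verified Lean document; each statement's English description precedes it below -/
import Mathlib

section
/- Let $F:\Sigma_N\times I\to\Sigma_N\times I$, $F(\xi,p)=(\sigma\xi, f_{\xi_0}(p))$, be a step skew-product whose fiber maps $f_1,\dots,f_N:I\to I$ are $C^1$ diffeomorphisms onto their images, and let $\Lambda=\bigcap_{n\ge0}F^n(\Sigma_N\times I)$ be its maximal invariant set. If $H\subset\Lambda$ is an $F$-invariant hyperbolic set (with fiber contraction or fiber expansion), then there exists $M\ge1$ such that for every $\xi\in\Sigma_N$ the fiber slice $H_\xi=\{p\in I:(\xi,p)\in H\}$ has cardinality at most $M$. -/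
open Set Filter MeasureTheory Topology

noncomputable section

/-- The base space `Σ_N = {1,…,N}^ℤ`. -/
abbrev BSeq (N : ℕ) := ℤ → Fin N

/-- The shift map on bilateral sequences. -/
def shiftSeq {α : Type*} (ξ : ℤ → α) : ℤ → α := fun n => ξ (n + 1)

/-- The unit interval. -/
def I01 : Set ℝ := Set.Icc 0 1

/-- Forward composition of fiber maps: `fw h ξ n = h (ξ (n-1)) ∘ ⋯ ∘ h (ξ 0)`. -/
def fw {α : Type*} (h : α → ℝ → ℝ) (ξ : ℤ → α) : ℕ → ℝ → ℝ
  | 0 => id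
  | n + 1 => fun p => h (ξ (n : ℤ)) (fw h ξ n p)

/-- The step skew-product `F(ξ,p) = (σξ, f_{ξ₀}(p))`. -/
def Fmap {N : ℕ} (f : Fin N → ℝ → ℝ) (z : BSeq N × ℝ) : BSeq N × ℝ :=
  (shiftSeq z.1, f (z.1 0) z.2)

/-- `H` is hyperbolic with fiber contraction. -/
def HypContr {N : ℕ} (f : Fin N → ℝ → ℝ) (H : Set (BSeq N × ℝ)) : Prop :=
  ∃ c : ℝ, 0 < c ∧ ∃ lam : ℝ, 0 < lam ∧ lam < 1 ∧
    ∀ n : ℕ, 1 ≤ n → ∀ z ∈ H, |deriv (fw f z.1 n) z.2| ≤ c * lam ^ n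

/-- `H` is hyperbolic with fiber expansion (fiber contraction for `F⁻¹`). -/
def HypExp {N : ℕ} (f : Fin N → ℝ → ℝ) (H : Set (BSeq N × ℝ)) : Prop :=
  ∃ c : ℝ, 0 < c ∧ ∃ lam : ℝ, 0 < lam ∧ lam < 1 ∧
    ∀ n : ℕ, 1 ≤ n → ∀ z ∈ H, c⁻¹ * lam⁻¹ ^ n ≤ |deriv (fw f z.1 n) z.2|


/-!
Choose `n` with `|(f_{ξ₀⋯ξ_{n-1}})'| ≤ 1/4` on `H` (fiber contraction) or `≥ 3` on `H`
(fiber expansion). There are only finitely many words of length `n`, so the derivatives of the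
`n`-step fiber maps share a modulus of continuity `δ` on `I`, and by the mean value theorem they
halve, resp. double, the distance between `δ`-close points near `H`; in the expanding case
injectivity also keeps `δ`-far points `δ`-far. Follow the points of a fiber `H_ξ` backwards,
resp. forwards, along `F^n` inside `H`. If two of them are `δ`-close at time `k`, they were at
distance at most `2^{-k} δ` at time `0`; so distinct points are eventually `δ`-apart, any finite
subset of `H_ξ` is eventually `δ`-separated in `I`, and it has at most `⌊1/δ⌋ + 1` points.
-/

section Counting

lemma le_pow_mul_of_le_mul_succ {d : ℕ → ℝ} {δ ρ : ℝ} (hδ : 0 ≤ δ) (hρ0 : 0 ≤ ρ) (hρ1 : ρ ≤ 1)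
    (hstep : ∀ k, d (k + 1) ≤ δ → d k ≤ ρ * d (k + 1)) (K : ℕ) (hK : d K ≤ δ) :
    d 0 ≤ ρ ^ K * δ := by
  induction K generalizing d with
  | zero => simpa using hK
  | succ K ih =>
    have h1 : d 1 ≤ ρ ^ K * δ := ih (d := fun k => d (k + 1)) (fun k => hstep (k + 1)) hK
    have h1' : d 1 ≤ δ := h1.trans (mul_le_of_le_one_left hδ (pow_le_one₀ hρ0 hρ1))
    calc d 0 ≤ ρ * d 1 := hstep 0 h1'
      _ ≤ ρ * (ρ ^ K * δ) := mul_le_mul_of_nonneg_left h1 hρ0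
      _ = ρ ^ (K + 1) * δ := by ring

lemma eventually_lt_of_le_mul_succ {d : ℕ → ℝ} {δ ρ : ℝ} (hδ : 0 ≤ δ) (hρ0 : 0 ≤ ρ)
    (hρ1 : ρ < 1) (hstep : ∀ k, d (k + 1) ≤ δ → d k ≤ ρ * d (k + 1)) (h0 : 0 < d 0) :
    ∀ᶠ K in atTop, δ < d K := by
  have hlim : Tendsto (fun K => ρ ^ K * δ) atTop (𝓝 0) := by
    simpa using (tendsto_pow_atTop_nhds_zero_of_lt_one hρ0 hρ1).mul_const δ
  filter_upwards [hlim.eventually (gt_mem_nhds h0)] with K hK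
  by_contra! hle
  exact (le_pow_mul_of_le_mul_succ hδ hρ0 hρ1.le hstep K hle).not_gt hK

lemma card_le_floor_inv_add_one_of_separated {S : Finset ℝ} {δ : ℝ} (hδ : 0 < δ)
    (hS : ↑S ⊆ Icc (0 : ℝ) 1) (hsep : (S : Set ℝ).Pairwise fun x y => δ ≤ |x - y|) :
    S.card ≤ ⌊δ⁻¹⌋₊ + 1 := by
  have hmaps : ∀ x ∈ S, ⌊x / δ⌋₊ ∈ Finset.range (⌊δ⁻¹⌋₊ + 1) := fun x hx => by
    rw [Finset.mem_range, Nat.lt_add_one_iff, ← one_div]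
    exact Nat.floor_le_floor (div_le_div_of_nonneg_right (hS hx).2 hδ.le)
  have hinj : Set.InjOn (fun x => ⌊x / δ⌋₊) S := by
    intro x hx y hy hxy
    by_contra hne
    have hfloor : ⌊x / δ⌋ = ⌊y / δ⌋ := by
      rw [← Int.natCast_floor_eq_floor (div_nonneg (hS hx).1 hδ.le),
        ← Int.natCast_floor_eq_floor (div_nonneg (hS hy).1 hδ.le)]
      exact congrArg _ hxy
    have hlt : |x - y| < δ := by
      have := Int.abs_sub_lt_one_of_floor_eq_floor hfloor
      rwa [← sub_div, abs_div, abs_of_pos hδ, div_lt_one hδ] at this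
    exact (hsep hx hy hne).not_gt hlt
  simpa using Finset.card_le_card_of_injOn _ hmaps hinj

lemma Set.finite_and_natCard_le_of_forall_finset {α : Type*} {T : Set α} {M : ℕ}
    (h : ∀ S : Finset α, ↑S ⊆ T → S.card ≤ M) : T.Finite ∧ Nat.card T ≤ M := by
  have hfin : T.Finite := by
    by_contra hinf
    obtain ⟨S, hS, hcard⟩ := Set.Infinite.exists_subset_card_eq hinf (M + 1)
    have := h S hS
    omega
  refine ⟨hfin, ?_⟩
  rw [Nat.card_coe_set_eq, Set.ncard_eq_toFinset_card T hfin]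
  exact h hfin.toFinset (by simp)

end Counting

/-- `ψ k p` is the position at time `k` of the point `p ∈ T`, followed forwards or backwards along
a dynamics. -/
structure IsSpreadingSequence (δ ρ : ℝ) (T : Set ℝ) (ψ : ℕ → ℝ → ℝ) : Prop where
  mapsTo : ∀ k, MapsTo (ψ k) T (Icc 0 1)
  zero : ∀ p ∈ T, ψ 0 p = p
  step : ∀ k, ∀ p ∈ T, ∀ q ∈ T, |ψ (k + 1) p - ψ (k + 1) q| ≤ δ →
    |ψ k p - ψ k q| ≤ ρ * |ψ (k + 1) p - ψ (k + 1) q|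

namespace IsSpreadingSequence

variable {δ ρ : ℝ} {T : Set ℝ} {ψ : ℕ → ℝ → ℝ}

lemma eventually_lt (h : IsSpreadingSequence δ ρ T ψ) (hδ : 0 ≤ δ) (hρ0 : 0 ≤ ρ) (hρ1 : ρ < 1)
    {p q : ℝ} (hp : p ∈ T) (hq : q ∈ T) (hpq : p ≠ q) :
    ∀ᶠ k in atTop, δ < |ψ k p - ψ k q| := by
  refine eventually_lt_of_le_mul_succ hδ hρ0 hρ1 (fun k => h.step k p hp q hq) ?_
  rw [h.zero p hp, h.zero q hq]
  exact abs_sub_pos.2 hpq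

lemma finite_and_natCard_le (h : IsSpreadingSequence δ ρ T ψ) (hδ : 0 < δ) (hρ0 : 0 ≤ ρ)
    (hρ1 : ρ < 1) : T.Finite ∧ Nat.card T ≤ ⌊δ⁻¹⌋₊ + 1 := by
  refine Set.finite_and_natCard_le_of_forall_finset fun S hS => ?_
  obtain ⟨k, hk⟩ : ∃ k, ∀ p ∈ S, ∀ q ∈ S, p ≠ q → δ < |ψ k p - ψ k q| := by
    refine (Eventually.exists (f := atTop) <| (eventually_all_finset S).2 fun p hp =>
      (eventually_all_finset S).2 fun q hq => ?_)
    rcases eq_or_ne p q with rfl | hpq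
    · exact .of_forall fun _ hne => (hne rfl).elim
    · exact (h.eventually_lt hδ.le hρ0 hρ1 (hS hp) (hS hq) hpq).mono fun _ hk _ => hk
  have hinj : Set.InjOn (ψ k) S := fun p hp q hq hpq => by
    by_contra hne
    have := hk p hp q hq hne
    rw [hpq, sub_self, abs_zero] at this
    linarith
  rw [← Finset.card_image_of_injOn hinj]
  refine card_le_floor_inv_add_one_of_separated hδ ?_ ?_
  · rw [Finset.coe_image]
    exact ((h.mapsTo k).mono_left hS).image_subset
  · rintro _ hx _ hy hne
    simp only [Finset.coe_image, Set.mem_image, Finset.mem_coe] at hx hy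
    obtain ⟨p, hp, rfl⟩ := hx
    obtain ⟨q, hq, rfl⟩ := hy
    exact (hk p hp q hq (fun h => hne (h ▸ rfl))).le

end IsSpreadingSequence

section MeanValue

variable {g : ℝ → ℝ} {s : Set ℝ} {a b δ ε : ℝ}

lemma exists_mem_uIcc_sub_eq_deriv_mul (hg : ∀ x ∈ uIcc a b, DifferentiableAt ℝ g x) :
    ∃ θ ∈ uIcc a b, g b - g a = deriv g θ * (b - a) := by
  wlog hab : a ≤ b generalizing a b
  · obtain ⟨θ, hθ, heq⟩ := this (by rwa [uIcc_comm]) (le_of_not_ge hab)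
    exact ⟨θ, uIcc_comm a b ▸ hθ, by linarith⟩
  rcases hab.eq_or_lt with rfl | hlt
  · exact ⟨a, left_mem_uIcc, by simp⟩
  rw [uIcc_of_le hab] at hg
  obtain ⟨θ, hθ, hslope⟩ := exists_deriv_eq_slope g hlt
    (fun x hx => (hg x hx).continuousAt.continuousWithinAt)
    (fun x hx => (hg x (Ioo_subset_Icc_self hx)).differentiableWithinAt)
  refine ⟨θ, uIcc_of_le hab ▸ Ioo_subset_Icc_self hθ, ?_⟩
  rw [hslope, div_mul_cancel₀ _ (sub_ne_zero.2 hlt.ne')]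

lemma exists_abs_image_sub_eq [s.OrdConnected] (hd : ∀ x ∈ s, DifferentiableAt ℝ g x)
    (ha : a ∈ s) (hb : b ∈ s) :
    ∃ θ ∈ s, |θ - a| ≤ |b - a| ∧ |g a - g b| = |deriv g θ| * |a - b| := by
  have hsub : uIcc a b ⊆ s := Set.OrdConnected.uIcc_subset ‹_› ha hb
  obtain ⟨θ, hθ, heq⟩ := exists_mem_uIcc_sub_eq_deriv_mul fun x hx => hd x (hsub hx)
  refine ⟨θ, hsub hθ, abs_sub_left_of_mem_uIcc hθ, ?_⟩
  rw [abs_sub_comm, heq, abs_mul, abs_sub_comm]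

variable [s.OrdConnected] (hd : ∀ x ∈ s, DifferentiableAt ℝ g x)
  (hmod : ∀ x ∈ s, ∀ y ∈ s, |x - y| ≤ δ → |deriv g x - deriv g y| ≤ ε)
include hd hmod

lemma abs_image_sub_le_of_deriv_modulus (ha : a ∈ s) (hb : b ∈ s) (hab : |a - b| ≤ δ) :
    |g a - g b| ≤ (|deriv g a| + ε) * |a - b| := by
  obtain ⟨θ, hθ, hθa, heq⟩ := exists_abs_image_sub_eq hd ha hb
  have hθ' : |deriv g θ| ≤ |deriv g a| + ε := by
    have := hmod θ hθ a ha (hθa.trans (abs_sub_comm b a ▸ hab))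
    linarith [abs_sub_abs_le_abs_sub (deriv g θ) (deriv g a)]
  rw [heq]
  exact mul_le_mul_of_nonneg_right hθ' (abs_nonneg _)

lemma le_abs_image_sub_of_deriv_modulus (ha : a ∈ s) (hb : b ∈ s) (hab : |a - b| ≤ δ) :
    (|deriv g a| - ε) * |a - b| ≤ |g a - g b| := by
  obtain ⟨θ, hθ, hθa, heq⟩ := exists_abs_image_sub_eq hd ha hb
  have hθ' : |deriv g a| - ε ≤ |deriv g θ| := by
    have := hmod a ha θ hθ (abs_sub_comm a θ ▸ hθa.trans (abs_sub_comm b a ▸ hab))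
    linarith [abs_sub_abs_le_abs_sub (deriv g a) (deriv g θ)]
  rw [heq]
  exact mul_le_mul_of_nonneg_right hθ' (abs_nonneg _)

omit hmod in
lemma abs_image_sub_le_of_injOn (hinj : InjOn g s) {c : ℝ} (ha : a ∈ s) (hb : b ∈ s)
    (hc : c ∈ Icc a b) : |g a - g c| ≤ |g a - g b| := by
  have hsub : Icc a b ⊆ s := Set.Icc_subset s ha hb
  have hab : a ≤ b := hc.1.trans hc.2
  rcases ContinuousOn.strictMonoOn_of_injOn_Icc' hab
      (fun x hx => (hd x (hsub hx)).continuousAt.continuousWithinAt) (hinj.mono hsub) with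
    hm | hm
  · have h1 := hm.monotoneOn (left_mem_Icc.2 hab) hc hc.1
    have h2 := hm.monotoneOn hc (right_mem_Icc.2 hab) hc.2
    rw [abs_le']
    constructor <;> linarith [le_abs_self (g a - g b), neg_le_abs (g a - g b)]
  · have h1 := hm.antitoneOn (left_mem_Icc.2 hab) hc hc.1
    have h2 := hm.antitoneOn hc (right_mem_Icc.2 hab) hc.2
    rw [abs_le']
    constructor <;> linarith [le_abs_self (g a - g b), neg_le_abs (g a - g b)]

/-- A `δ`-large gap cannot be mapped to a `δ`-small one: otherwise, by monotonicity, so would be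
the gap between `a` and `a + δ`, which is expanded. -/
lemma mul_abs_sub_le_abs_image_sub (hinj : InjOn g s) (hδ : 0 < δ) {L : ℝ} (hL : 1 < L)
    (ha : a ∈ s) (hb : b ∈ s) (hga : L + ε ≤ |deriv g a|) (hgb : L + ε ≤ |deriv g b|)
    (hgab : |g a - g b| ≤ δ) : L * |a - b| ≤ |g a - g b| := by
  wlog hab : a ≤ b generalizing a b
  · rw [abs_sub_comm a, abs_sub_comm (g a)] at *
    exact this hb ha hgb hga hgab (le_of_not_ge hab)
  by_cases hclose : |a - b| ≤ δ
  · have := le_abs_image_sub_of_deriv_modulus hd hmod ha hb hclose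
    nlinarith [abs_nonneg (a - b)]
  · exfalso
    have hfar : a + δ < b := by
      rw [abs_sub_comm, abs_of_nonneg (by linarith)] at hclose
      linarith
    have hc : a + δ ∈ Icc a b := ⟨by linarith, hfar.le⟩
    have hgap : |a - (a + δ)| = δ := by simp [abs_of_pos hδ]
    have h1 := le_abs_image_sub_of_deriv_modulus hd hmod ha (Set.Icc_subset s ha hb hc)
      hgap.le
    have h2 := abs_image_sub_le_of_injOn hd hinj ha hb hc
    rw [hgap] at h1
    nlinarith

end MeanValue

lemma uniformEquicontinuousOn_of_finite_range {ι β γ : Type*} [UniformSpace β] [UniformSpace γ]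
    {F : ι → β → γ} {S : Set β} (hfin : (range F).Finite)
    (hF : ∀ i, UniformContinuousOn (F i) S) : UniformEquicontinuousOn F S := by
  rw [uniformEquicontinuousOn_iff_range]
  have := hfin.to_subtype
  exact uniformEquicontinuousOn_finite.2 fun ⟨_, i, hi⟩ => hi ▸ hF i

lemma UniformEquicontinuousOn.exists_forall_dist_le {ι β γ : Type*} [PseudoMetricSpace β]
    [PseudoMetricSpace γ] {F : ι → β → γ} {S : Set β} (hF : UniformEquicontinuousOn F S)
    {ε : ℝ} (hε : 0 < ε) :
    ∃ δ > 0, ∀ x ∈ S, ∀ y ∈ S, dist x y ≤ δ → ∀ i, dist (F i x) (F i y) ≤ ε := by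
  obtain ⟨δ, hδ, hδε⟩ := (Metric.uniformity_basis_dist_le.inf_principal (S ×ˢ S)).eventually_iff.1
    (hF _ (Metric.uniformity_basis_dist_le.mem_of_mem hε))
  exact ⟨δ, hδ, fun x hx y hy hxy => hδε (x := (x, y)) ⟨hxy, hx, hy⟩⟩

lemma continuousOn_deriv_of_contDiffOn {g : ℝ → ℝ} {s : Set ℝ} (hs : UniqueDiffOn ℝ s)
    (hg : ContDiffOn ℝ 1 g s) (hd : ∀ x ∈ s, DifferentiableAt ℝ g x) :
    ContinuousOn (deriv g) s :=
  (hg.continuousOn_derivWithin hs le_rfl).congr fun x hx => ((hd x hx).derivWithin (hs x hx)).symm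

section Compositions

variable {α : Type*} {h : α → ℝ → ℝ} {s : Set ℝ}

lemma shiftSeq_iterate_apply (ξ : ℤ → α) (a : ℕ) (m : ℤ) : shiftSeq^[a] ξ m = ξ (m + a) := by
  induction a generalizing ξ with
  | zero => simp
  | succ a ih =>
    rw [Function.iterate_succ_apply, ih]
    simp only [shiftSeq, Nat.cast_succ]
    ring_nf

lemma shiftSeq_injective : Function.Injective (@shiftSeq α) := fun ξ η hξη =>
  funext fun m => by simpa [shiftSeq] using congrFun hξη (m - 1)

lemma fw_add (ξ : ℤ → α) (a m : ℕ) (p : ℝ) :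
    fw h ξ (a + m) p = fw h (shiftSeq^[a] ξ) m (fw h ξ a p) := by
  induction m with
  | zero => rfl
  | succ m ih =>
    change h (ξ ↑(a + m)) (fw h ξ (a + m) p) = h (shiftSeq^[a] ξ m) (fw h (shiftSeq^[a] ξ) m _)
    rw [ih, shiftSeq_iterate_apply, Nat.cast_add, add_comm (a : ℤ)]

lemma fw_congr {ξ η : ℤ → α} {n : ℕ} (hξη : ∀ k < n, ξ k = η k) : fw h ξ n = fw h η n := by
  induction n with
  | zero => rfl
  | succ n ih =>
    funext p
    simp only [fw]
    rw [ih fun k hk => hξη k (Nat.lt_succ_of_lt hk), hξη n (Nat.lt_succ_self n)]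

lemma finite_range_fw [Finite α] (n : ℕ) : (range fun ξ : ℤ → α => fw h ξ n).Finite := by
  have hfac : (fun ξ : ℤ → α => fw h ξ n).FactorsThrough fun ξ (k : Fin n) => ξ k :=
    fun ξ η hξη => fw_congr fun k hk => congrFun hξη ⟨k, hk⟩
  rw [← hfac.extend_comp fun _ => id]
  exact (finite_range _).subset (range_comp_subset_range _ _)

variable (hmap : ∀ a, MapsTo (h a) s s)
include hmap

lemma mapsTo_fw (ξ : ℤ → α) : ∀ n, MapsTo (fw h ξ n) s s
  | 0 => mapsTo_id s
  | n + 1 => (hmap _).comp (mapsTo_fw ξ n)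

lemma injOn_fw (hinj : ∀ a, InjOn (h a) s) (ξ : ℤ → α) : ∀ n, InjOn (fw h ξ n) s
  | 0 => injOn_id s
  | n + 1 => (hinj _).comp (injOn_fw hinj ξ n) (mapsTo_fw hmap ξ n)

lemma contDiffOn_fw {k : WithTop ℕ∞} (hC : ∀ a, ContDiffOn ℝ k (h a) s) (ξ : ℤ → α) :
    ∀ n, ContDiffOn ℝ k (fw h ξ n) s
  | 0 => contDiffOn_id
  | n + 1 => (hC _).comp (contDiffOn_fw hC ξ n) (mapsTo_fw hmap ξ n)

lemma differentiableAt_fw (hd : ∀ a, ∀ p ∈ s, DifferentiableAt ℝ (h a) p) (ξ : ℤ → α) :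
    ∀ n, ∀ p ∈ s, DifferentiableAt ℝ (fw h ξ n) p
  | 0 => fun _ _ => differentiableAt_id
  | n + 1 => fun p hp =>
    (hd _ _ (mapsTo_fw hmap ξ n hp)).comp p (differentiableAt_fw hd ξ n p hp)

lemma exists_abs_deriv_fw_sub_le [Finite α] (hs : IsCompact s) (hus : UniqueDiffOn ℝ s)
    (hC : ∀ a, ContDiffOn ℝ 1 (h a) s) (hd : ∀ a, ∀ p ∈ s, DifferentiableAt ℝ (h a) p)
    (n : ℕ) {ε : ℝ} (hε : 0 < ε) :
    ∃ δ > 0, ∀ ξ : ℤ → α, ∀ x ∈ s, ∀ y ∈ s, |x - y| ≤ δ →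
      |deriv (fw h ξ n) x - deriv (fw h ξ n) y| ≤ ε := by
  have hF : UniformEquicontinuousOn (fun ξ : ℤ → α => deriv (fw h ξ n)) s := by
    refine uniformEquicontinuousOn_of_finite_range ?_ fun ξ =>
      hs.uniformContinuousOn_of_continuous (continuousOn_deriv_of_contDiffOn hus
        (contDiffOn_fw hmap hC ξ n) (differentiableAt_fw hmap hd ξ n))
    rw [range_comp' deriv]
    exact (finite_range_fw n).image deriv
  obtain ⟨δ, hδ, hδε⟩ := hF.exists_forall_dist_le hε
  exact ⟨δ, hδ, fun ξ x hx y hy hxy => hδε x hx y hy hxy ξ⟩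

end Compositions

lemma Set.BijOn.iterate_invFunOn_add {α : Type*} [Nonempty α] {F : α → α} {H : Set α}
    (hF : BijOn F H H) (m n : ℕ) {z : α} (hz : z ∈ H) :
    F^[n] (Function.invFunOn F^[m + n] H z) = Function.invFunOn F^[m] H z := by
  have hz' := (hF.iterate (m + n)).surjOn hz
  have hw : F^[n] (Function.invFunOn F^[m + n] H z) ∈ H :=
    hF.mapsTo.iterate n (Function.invFunOn_mem hz')
  rw [← (hF.iterate m).injOn.leftInvOn_invFunOn hw, ← Function.iterate_add_apply,
    Function.invFunOn_eq hz']

section SkewProduct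

variable {N : ℕ} {f : Fin N → ℝ → ℝ}

instance ordConnected_I01 : I01.OrdConnected := ordConnected_Icc

lemma Fmap_iterate (m : ℕ) (z : BSeq N × ℝ) :
    (Fmap f)^[m] z = (shiftSeq^[m] z.1, fw f z.1 m z.2) := by
  induction m with
  | zero => rfl
  | succ m ih =>
    rw [Function.iterate_succ_apply', ih]
    simp only [Fmap, shiftSeq_iterate_apply, zero_add]
    rw [← Function.iterate_succ_apply' shiftSeq]
    rfl

lemma injOn_Fmap {s : Set ℝ} (hinj : ∀ i, InjOn (f i) s) : InjOn (Fmap f) (univ ×ˢ s) := by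
  rintro ⟨ξ, p⟩ ⟨-, hp⟩ ⟨η, q⟩ ⟨-, hq⟩ hpq
  simp only [Fmap, Prod.mk.injEq] at hpq
  obtain rfl := shiftSeq_injective hpq.1
  exact Prod.ext rfl (hinj _ hp hq hpq.2)

lemma HypContr.exists_abs_deriv_fw_le {H : Set (BSeq N × ℝ)} (hH : HypContr f H) {ε : ℝ}
    (hε : 0 < ε) : ∃ n, ∀ z ∈ H, |deriv (fw f z.1 n) z.2| ≤ ε := by
  obtain ⟨c, -, lam, hlam0, hlam1, hbound⟩ := hH
  have hlim : Tendsto (fun n => c * lam ^ n) atTop (𝓝 0) := by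
    simpa using (tendsto_pow_atTop_nhds_zero_of_lt_one hlam0.le hlam1).const_mul c
  obtain ⟨n, hn1, hn⟩ := ((eventually_ge_atTop 1).and (hlim.eventually (ge_mem_nhds hε))).exists
  exact ⟨n, fun z hz => (hbound n hn1 z hz).trans hn⟩

lemma HypExp.exists_le_abs_deriv_fw {H : Set (BSeq N × ℝ)} (hH : HypExp f H) (C : ℝ) :
    ∃ n, ∀ z ∈ H, C ≤ |deriv (fw f z.1 n) z.2| := by
  obtain ⟨c, hc, lam, hlam0, hlam1, hbound⟩ := hH
  have hlim : Tendsto (fun n => c⁻¹ * lam⁻¹ ^ n) atTop atTop :=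
    (tendsto_pow_atTop_atTop_of_one_lt ((one_lt_inv₀ hlam0).2 hlam1)).const_mul_atTop
      (inv_pos.2 hc)
  obtain ⟨n, hn1, hn⟩ := ((eventually_ge_atTop 1).and (hlim.eventually_ge_atTop C)).exists
  exact ⟨n, fun z hz => hn.trans (hbound n hn1 z hz)⟩

variable {H : Set (BSeq N × ℝ)} {n : ℕ} {δ : ℝ} (hHI : ∀ z ∈ H, z.2 ∈ I01)
  (hdiff : ∀ i, ∀ p ∈ I01, DifferentiableAt ℝ (f i) p) (hmap : ∀ i, MapsTo (f i) I01 I01)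
include hHI hdiff hmap

/-- Under fiber contraction the fiber over `ξ` is followed backwards, through the preimages of
`F^(k n)` in `H`. -/
lemma exists_isSpreadingSequence_of_contracting (hbij : BijOn (Fmap f) H H)
    (hsmall : ∀ z ∈ H, |deriv (fw f z.1 n) z.2| ≤ 1 / 4)
    (hmod : ∀ η : BSeq N, ∀ x ∈ I01, ∀ y ∈ I01, |x - y| ≤ δ →
      |deriv (fw f η n) x - deriv (fw f η n) y| ≤ 1 / 4) (ξ : BSeq N) :
    ∃ ψ, IsSpreadingSequence δ (1 / 2) {p | (ξ, p) ∈ H} ψ := by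
  have : Nonempty (BSeq N × ℝ) := ⟨(ξ, 0)⟩
  obtain ⟨B, hBmem, hBinv, hBadd⟩ : ∃ B : ℕ → BSeq N × ℝ → BSeq N × ℝ,
      (∀ m, ∀ z ∈ H, B m z ∈ H) ∧ (∀ m, ∀ z ∈ H, (Fmap f)^[m] (B m z) = z) ∧
      ∀ m n, ∀ z ∈ H, (Fmap f)^[n] (B (m + n) z) = B m z :=
    ⟨fun m => Function.invFunOn (Fmap f)^[m] H,
      fun m _ hz => Function.invFunOn_mem ((hbij.iterate m).surjOn hz),
      fun m _ hz => Function.invFunOn_eq ((hbij.iterate m).surjOn hz),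
      fun m n _ hz => hbij.iterate_invFunOn_add m n hz⟩
  have hbase : ∀ m p q, (ξ, p) ∈ H → (ξ, q) ∈ H → (B m (ξ, q)).1 = (B m (ξ, p)).1 :=
    fun m p q hp hq => shiftSeq_injective.iterate m <| by
      have hp' := congrArg Prod.fst (hBinv m _ hp)
      have hq' := congrArg Prod.fst (hBinv m _ hq)
      rw [Fmap_iterate] at hp' hq'
      exact hq'.trans hp'.symm
  have hrel : ∀ k p, (ξ, p) ∈ H →
      (B (k * n) (ξ, p)).2 = fw f (B ((k + 1) * n) (ξ, p)).1 n (B ((k + 1) * n) (ξ, p)).2 :=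
    fun k p hp => by rw [add_one_mul, ← hBadd (k * n) n _ hp, Fmap_iterate]
  refine ⟨fun k p => (B (k * n) (ξ, p)).2, fun k p hp => hHI _ (hBmem _ _ hp),
    fun p hp => by simpa using congrArg Prod.snd (hBinv 0 _ hp), fun k p hp q hq hclose => ?_⟩
  simp only [hrel k p hp, hrel k q hq, hbase _ p q hp hq] at hclose ⊢
  have hwp := hBmem ((k + 1) * n) _ hp
  have := abs_image_sub_le_of_deriv_modulus
    (differentiableAt_fw hmap hdiff (B ((k + 1) * n) (ξ, p)).1 n) (hmod _) (hHI _ hwp)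
    (hHI _ (hBmem ((k + 1) * n) _ hq)) hclose
  exact this.trans (mul_le_mul_of_nonneg_right (by linarith [hsmall _ hwp]) (abs_nonneg _))

/-- Under fiber expansion the fiber over `ξ` is followed forwards, along `F^(k n)`. -/
lemma exists_isSpreadingSequence_of_expanding (hH : MapsTo (Fmap f) H H)
    (hinj : ∀ i, InjOn (f i) I01) (hδ : 0 < δ)
    (hbig : ∀ z ∈ H, 3 ≤ |deriv (fw f z.1 n) z.2|)
    (hmod : ∀ η : BSeq N, ∀ x ∈ I01, ∀ y ∈ I01, |x - y| ≤ δ →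
      |deriv (fw f η n) x - deriv (fw f η n) y| ≤ 1) (ξ : BSeq N) :
    ∃ ψ, IsSpreadingSequence δ (1 / 2) {p | (ξ, p) ∈ H} ψ := by
  have horbit : ∀ k, ∀ p ∈ {p | (ξ, p) ∈ H}, (shiftSeq^[k * n] ξ, fw f ξ (k * n) p) ∈ H :=
    fun k p hp => by simpa [Fmap_iterate] using hH.iterate (k * n) hp
  refine ⟨fun k => fw f ξ (k * n), fun k p hp => mapsTo_fw hmap ξ _ (hHI _ hp),
    fun p _ => by rw [zero_mul]; rfl, fun k p hp q hq hclose => ?_⟩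
  have hrel : ∀ p, fw f ξ ((k + 1) * n) p = fw f (shiftSeq^[k * n] ξ) n (fw f ξ (k * n) p) :=
    fun p => by rw [add_one_mul, fw_add]
  simp only [hrel] at hclose ⊢
  have hp' := horbit k p hp
  have hq' := horbit k q hq
  have := mul_abs_sub_le_abs_image_sub (differentiableAt_fw hmap hdiff _ n) (hmod _)
    (injOn_fw hmap hinj _ n) hδ one_lt_two (hHI _ hp') (hHI _ hq')
    (by linarith [hbig _ hp']) (by linarith [hbig _ hq']) hclose
  linarith

end SkewProduct

/-- **Theorem A.** Any invariant hyperbolic set of a step skew-product with `C¹`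
injective fiber maps intersects every fiber in a uniformly bounded number of points. -/
theorem invariant_hyperbolic_set_fibers_uniformly_finite
    {N : ℕ} (f : Fin N → ℝ → ℝ)
    (hC1 : ∀ i, ContDiffOn ℝ 1 (f i) I01)
    (hinj : ∀ i, Set.InjOn (f i) I01)
    (hmap : ∀ i, Set.MapsTo (f i) I01 I01)
    (hder : ∀ i, ∀ p ∈ I01, deriv (f i) p ≠ 0)
    (H : Set (BSeq N × ℝ))
    (hHΛ : H ⊆ ⋂ n : ℕ, (Fmap f)^[n] '' (Set.univ ×ˢ I01))
    (hHinv : Fmap f '' H = H)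
    (hhyp : HypContr f H ∨ HypExp f H) :
    ∃ M : ℕ, 1 ≤ M ∧ ∀ ξ : BSeq N,
      {p : ℝ | (ξ, p) ∈ H}.Finite ∧ Nat.card {p : ℝ | (ξ, p) ∈ H} ≤ M := by
  -- `deriv` is two-sided, so `hder` also gives differentiability at the endpoints of `I01`
  have hdiff : ∀ i, ∀ p ∈ I01, DifferentiableAt ℝ (f i) p := fun i p hp =>
    differentiableAt_of_deriv_ne_zero (hder i p hp)
  have hHI : ∀ z ∈ H, z.2 ∈ I01 := fun z hz => by simpa using mem_iInter.1 (hHΛ hz) 0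
  have hbij : BijOn (Fmap f) H H := by
    have hHsub : H ⊆ univ ×ˢ I01 := fun z hz => ⟨trivial, hHI z hz⟩
    simpa only [hHinv] using ((injOn_Fmap hinj).mono hHsub).bijOn_image
  have hmod := exists_abs_deriv_fw_sub_le hmap isCompact_Icc (uniqueDiffOn_Icc zero_lt_one) hC1
    hdiff
  obtain ⟨δ, hδ, hspread⟩ :
      ∃ δ > 0, ∀ ξ : BSeq N, ∃ ψ, IsSpreadingSequence δ (1 / 2) {p | (ξ, p) ∈ H} ψ := by
    rcases hhyp with hcon | hexp
    · obtain ⟨n, hn⟩ := hcon.exists_abs_deriv_fw_le (by norm_num : (0 : ℝ) < 1 / 4)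
      obtain ⟨δ, hδ, hδn⟩ := hmod n (by norm_num : (0 : ℝ) < 1 / 4)
      exact ⟨δ, hδ, exists_isSpreadingSequence_of_contracting hHI hdiff hmap hbij hn hδn⟩
    · obtain ⟨n, hn⟩ := hexp.exists_le_abs_deriv_fw 3
      obtain ⟨δ, hδ, hδn⟩ := hmod n one_pos
      exact ⟨δ, hδ, exists_isSpreadingSequence_of_expanding hHI hdiff hmap hbij.mapsTo hinj hδ
        hn hδn⟩
  refine ⟨⌊δ⁻¹⌋₊ + 1, Nat.le_add_left 1 _, fun ξ => ?_⟩
  obtain ⟨ψ, hψ⟩ := hspread ξ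
  exact hψ.finite_and_natCard_le hδ (by norm_num) (by norm_num)
end
end

section
/- (Common hyperbolic times) Let $\mu$ be ergodic with $\chi(\mu)>0$ and $H$ full-measure invariant with $\chi_+\equiv\chi(\mu)$ on $H$, let $d_0>0$ be a lower bound for the density of hyperbolic times of points of $H$ with exponent $\chi(\mu)-\varepsilon$, fix $0<d_1<d_0$ and $N_1\in\mathbb N$, and let $j\in\mathbb N$ satisfy $jd_1>N_1-1+d_1$. Then for any $\xi$ and any $j$ points $x_1,\dots,x_j\in H_\xi$, there exist $N_1$ of these points which share infinitely many (arbitrarily large) common hyperbolic times. -/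
open Set Filter MeasureTheory Topology

noncomputable section

/-- `n` is a hyperbolic time for `(ξ,p)` with exponent `ρ`. -/
def hypTime {N : ℕ} (f : Fin N → ℝ → ℝ) (ξ : BSeq N) (p : ℝ) (ρ : ℝ) (n : ℕ) : Prop :=
  ∀ m : ℕ, m ≤ n →
    Real.exp (((n - m + 1 : ℕ) : ℝ) * ρ) ≤
      |deriv (fw f (fun j => ξ (j + (m : ℤ))) (n - m + 1)) (fw f ξ m p)|

/-
Each of the `j` points has hyperbolic times of lower density `> d₁`. If no `N₁` of them shared
infinitely many hyperbolic times, then beyond some time `M` every instant would be a hyperbolic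
time for at most `N₁ - 1` of the points. Counting pairs (point, hyperbolic time) in `[1, n]` then
gives `j d₁ n ≤ (N₁ - 1) n + M j` for all large `n`, contradicting `j d₁ > N₁ - 1`.
-/

lemma eventually_mul_lt_ncard_of_lt_liminf {S : Set ℕ} {d : ℝ}
    (h : d < liminf (fun n : ℕ => ((Icc 1 n ∩ S).ncard : ℝ) / n) atTop) :
    ∀ᶠ n : ℕ in atTop, d * n < (Icc 1 n ∩ S).ncard := by
  have hbdd : IsBoundedUnder (· ≥ ·) atTop (fun n : ℕ => ((Icc 1 n ∩ S).ncard : ℝ) / n) :=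
    isBoundedUnder_of ⟨0, fun n => by positivity⟩
  filter_upwards [eventually_lt_of_lt_liminf h hbdd, eventually_gt_atTop 0] with n hn hn0
  rwa [lt_div_iff₀ (by exact_mod_cast hn0)] at hn

section CommonElements

variable {ι : Type*} [Fintype ι] (S : ι → Set ℕ)

lemma sum_ncard_Icc_inter_eq_sum_ncard_setOf_mem (n : ℕ) :
    ∑ i, (Icc 1 n ∩ S i).ncard = ∑ k ∈ Finset.Icc 1 n, {i | k ∈ S i}.ncard := by
  classical
  have hrow : ∀ i, (Icc 1 n ∩ S i).ncard = ((Finset.Icc 1 n).filter (· ∈ S i)).card := by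
    intro i
    rw [← Set.ncard_coe_finset]
    congr 1
    ext k
    simp
  have hcol : ∀ k, {i | k ∈ S i}.ncard = (Finset.univ.filter (k ∈ S ·)).card := by
    intro k
    rw [← Set.ncard_coe_finset]
    congr 1
    ext i
    simp
  simp only [hrow, hcol, Finset.card_filter]
  exact Finset.sum_comm

lemma finite_setOf_lt_ncard_setOf_mem {m : ℕ}
    (hS : ∀ s : Finset ι, s.card = m + 1 → {n | ∀ i ∈ s, n ∈ S i}.Finite) :
    {k | m < {i | k ∈ S i}.ncard}.Finite := by
  refine (Set.Finite.biUnion (Set.toFinite {s : Finset ι | s.card = m + 1}) hS).subset ?_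
  intro k hk
  obtain ⟨s, hs, hcard⟩ := Finset.exists_subset_card_eq (n := m + 1)
    (s := (Set.toFinite {i | k ∈ S i}).toFinset) (by rw [← Set.ncard_eq_toFinset_card]; exact hk)
  exact Set.mem_biUnion hcard fun i hi => by simpa using hs hi

lemma sum_ncard_Icc_inter_le {m M : ℕ} (hM : ∀ k, M < k → {i | k ∈ S i}.ncard ≤ m) (n : ℕ) :
    ∑ i, (Icc 1 n ∩ S i).ncard ≤ m * n + M * Fintype.card ι := by
  classical
  rw [sum_ncard_Icc_inter_eq_sum_ncard_setOf_mem,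
    ← Finset.sum_filter_not_add_sum_filter (Finset.Icc 1 n) (· ≤ M)]
  gcongr
  · calc ∑ k ∈ (Finset.Icc 1 n).filter (¬ · ≤ M), {i | k ∈ S i}.ncard
        ≤ ((Finset.Icc 1 n).filter (¬ · ≤ M)).card * m :=
          Finset.sum_le_card_nsmul _ _ _ fun k hk => hM k (not_le.1 (Finset.mem_filter.1 hk).2)
      _ ≤ m * n := by
          rw [mul_comm]
          gcongr
          exact (Finset.card_filter_le _ _).trans (by simp)
  · calc ∑ k ∈ (Finset.Icc 1 n).filter (· ≤ M), {i | k ∈ S i}.ncard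
        ≤ ((Finset.Icc 1 n).filter (· ≤ M)).card * Fintype.card ι :=
          Finset.sum_le_card_nsmul _ _ _ fun k _ =>
            (Set.ncard_le_card _).trans_eq Nat.card_eq_fintype_card
      _ ≤ M * Fintype.card ι := by
          gcongr
          calc ((Finset.Icc 1 n).filter (· ≤ M)).card ≤ (Finset.Icc 1 M).card :=
                Finset.card_le_card fun k hk => by
                  simp only [Finset.mem_filter, Finset.mem_Icc] at hk ⊢
                  omega
            _ = M := by simp

theorem exists_card_eq_succ_infinite_common_of_density {d : ℝ} {m : ℕ}
    (hm : (m : ℝ) < Fintype.card ι * d)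
    (hS : ∀ i, ∀ᶠ n : ℕ in atTop, d * n ≤ (Icc 1 n ∩ S i).ncard) :
    ∃ s : Finset ι, s.card = m + 1 ∧ {n | ∀ i ∈ s, n ∈ S i}.Infinite := by
  by_contra! hfin
  obtain ⟨M, hM⟩ := (finite_setOf_lt_ncard_setOf_mem S hfin).bddAbove
  have hsparse : ∀ k, M < k → {i | k ∈ S i}.ncard ≤ m := fun k hk => by
    by_contra! hlt
    exact hk.not_ge (hM hlt)
  have hbound : ∀ᶠ n : ℕ in atTop, (Fintype.card ι * d - m) * n ≤ M * Fintype.card ι := by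
    filter_upwards [eventually_all.2 hS] with n hn
    have hlow : Fintype.card ι * (d * n) ≤ ∑ i, ((Icc 1 n ∩ S i).ncard : ℝ) := by
      simpa using Finset.card_nsmul_le_sum Finset.univ _ _ fun i _ => hn i
    have hup : ∑ i, ((Icc 1 n ∩ S i).ncard : ℝ) ≤ m * n + M * Fintype.card ι := by
      exact_mod_cast sum_ncard_Icc_inter_le S hsparse n
    nlinarith
  have hgrow := (tendsto_natCast_atTop_atTop (R := ℝ)).const_mul_atTop (sub_pos.2 hm)
  obtain ⟨n, hn, hn'⟩ := ((hgrow.eventually_gt_atTop (M * Fintype.card ι : ℝ)).and hbound).exists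
  exact hn.not_ge hn'

end CommonElements

theorem common_hyperbolic_times_general
    {N : ℕ} (f : Fin N → ℝ → ℝ)
    (χμ : ℝ)
    (ε : ℝ)
    (H : Set (BSeq N × ℝ))
    (d0 : ℝ)
    (hdens : ∀ z ∈ H, d0 ≤ Filter.liminf
      (fun n : ℕ =>
        ((Set.Icc 1 n ∩ {k : ℕ | hypTime f z.1 z.2 (χμ - ε) k}).ncard : ℝ) / n)
      Filter.atTop)
    (d1 : ℝ) (hd1 : 0 < d1) (hd1d0 : d1 < d0)
    (N1 j : ℕ)
    (hj : (N1 : ℝ) - 1 + d1 < (j : ℝ) * d1)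
    (ξ : BSeq N) (x : Fin j → ℝ)
    (hx : ∀ i, (ξ, x i) ∈ H) :
    ∃ s : Finset (Fin j), s.card = N1 ∧
      {n : ℕ | ∀ i ∈ s, hypTime f ξ (x i) (χμ - ε) n}.Infinite := by
  cases N1 with
  | zero => exact ⟨∅, rfl, by simpa using Set.infinite_univ⟩
  | succ m =>
    have hm : (m : ℝ) < Fintype.card (Fin j) * d1 := by
      push_cast at hj
      simp only [Fintype.card_fin]
      linarith
    have hdense : ∀ i, ∀ᶠ n : ℕ in atTop,
        d1 * n ≤ (Icc 1 n ∩ {k | hypTime f ξ (x i) (χμ - ε) k}).ncard := fun i =>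
      (eventually_mul_lt_ncard_of_lt_liminf (hd1d0.trans_le (hdens _ (hx i)))).mono
        fun _ hn => hn.le
    exact exists_card_eq_succ_infinite_common_of_density _ hm hdense

/-- **Common hyperbolic times.** Among any `j` points in a fiber of `H`, if `j d₁ > N₁-1+d₁`,
some `N₁` of them share infinitely many common hyperbolic times. -/
theorem common_hyperbolic_times
    {N : ℕ} (f : Fin N → ℝ → ℝ)
    (hC1 : ∀ i, ContDiffOn ℝ 1 (f i) I01)
    (hinj : ∀ i, Set.InjOn (f i) I01)
    (hmap : ∀ i, Set.MapsTo (f i) I01 I01)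
    (hder : ∀ i, ∀ p ∈ I01, deriv (f i) p ≠ 0)
    (μ : Measure (BSeq N × ℝ)) [IsProbabilityMeasure μ]
    (herg : Ergodic (Fmap f) μ)
    (χμ : ℝ) (hχ : χμ = ∫ z, Real.log |deriv (f (z.1 0)) z.2| ∂μ) (hχpos : 0 < χμ)
    (ε : ℝ) (hε : 0 < ε) (hεχ : ε < χμ)
    (H : Set (BSeq N × ℝ)) (hHinv : Fmap f '' H = H) (hHfull : μ H = 1)
    (hHexp : ∀ z ∈ H, Filter.Tendsto
      (fun n : ℕ => (n : ℝ)⁻¹ * Real.log |deriv (fw f z.1 n) z.2|)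
      Filter.atTop (nhds χμ))
    (d0 : ℝ) (hd0 : 0 < d0)
    (hdens : ∀ z ∈ H, d0 ≤ Filter.liminf
      (fun n : ℕ =>
        ((Set.Icc 1 n ∩ {k : ℕ | hypTime f z.1 z.2 (χμ - ε) k}).ncard : ℝ) / n)
      Filter.atTop)
    (d1 : ℝ) (hd1 : 0 < d1) (hd1d0 : d1 < d0)
    (N1 j : ℕ)
    (hj : (N1 : ℝ) - 1 + d1 < (j : ℝ) * d1)
    (ξ : BSeq N) (x : Fin j → ℝ)
    (hx : ∀ i, (ξ, x i) ∈ H) (hxinj : Function.Injective x) :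
    ∃ s : Finset (Fin j), s.card = N1 ∧
      {n : ℕ | ∀ i ∈ s, hypTime f ξ (x i) (χμ - ε) n}.Infinite :=
  common_hyperbolic_times_general f χμ ε H d0 hdens d1 hd1 hd1d0 N1 j hj ξ x hx
end
end

section
/- (Projection of the doubling shift is a 2-to-1 semiconjugation) Let $\{1,\dots,N\}=\mathcal I_P\sqcup\mathcal I_R$ be a partition, and let $A=(a_{ij})_{i,j=1}^{2N}$ be the 0-1 matrix with $a_{ij}=1$ iff ($i\in\mathcal I_P$ and $1\le j\le N$) or ($i\in\mathcal I_R$ and $N+1\le j\le 2N$) or ($i-N\in\mathcal I_P$ and $N+1\le j\le 2N$) or ($i-N\in\mathcal I_R$ and $1\le j\le N$). Define $\pi:\Sigma_A\to\Sigma_N$ by $\pi(\omega)_n=\omega_n \bmod N$ (with representative in $\{1,\dots,N\}$). Then $\pi$ is continuous, surjective, satisfies $\pi\circ\sigma_A=\sigma\circ\pi$, and every point of $\Sigma_N$ has exactly two $\pi$-preimages in $\Sigma_A$. -/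
open Set Filter MeasureTheory Topology

noncomputable section

/-- Doubled symbol set `{1,…,2N}`: `(i, false)` is `i`, `(i, true)` is `i + N`. -/
abbrev DSym (N : ℕ) := Fin N × Bool

/-- `A`-admissibility for the orientation-doubling transition matrix, where
`part i = true` iff `f i` is orientation preserving. -/
def Admissible {N : ℕ} (part : Fin N → Bool) (ω : ℤ → DSym N) : Prop :=
  ∀ n : ℤ, (ω (n + 1)).2 = xor ((ω n).2) (!(part (ω n).1))

/-- The subshift of finite type `Σ_A` of `A`-admissible bilateral sequences. -/
abbrev SigmaA (N : ℕ) (part : Fin N → Bool) := {ω : ℤ → DSym N // Admissible part ω}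

/-- The shift map `σ_A` on `Σ_A`. -/
def shiftA {N : ℕ} {part : Fin N → Bool} (ω : SigmaA N part) : SigmaA N part :=
  ⟨shiftSeq ω.1, fun n => ω.2 (n + 1)⟩

/-- The 2-to-1 projection `π : Σ_A → Σ_N`, `π(ω)_n = ω_n mod N`. -/
def piA {N : ℕ} {part : Fin N → Bool} (ω : SigmaA N part) : BSeq N :=
  fun n => (ω.1 n).1

/-- The reflection `R(x) = 1 - x`. -/
def R : ℝ → ℝ := fun x => 1 - x

/-- The fiber maps of the extended step skew-product:
`g_i = f_i`, `g_{i+N} = R∘f_i∘R` for orientation-preserving `f_i`, and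
`g_i = R∘f_i`, `g_{i+N} = f_i∘R` for orientation-reversing `f_i`. -/
def gmap {N : ℕ} (f : Fin N → ℝ → ℝ) (part : Fin N → Bool) : DSym N → ℝ → ℝ :=
  fun s =>
    if part s.1 then (if s.2 then R ∘ f s.1 ∘ R else f s.1)
    else (if s.2 then f s.1 ∘ R else R ∘ f s.1)

/-- The extended step skew-product `G(ω,x) = (σ_A ω, g_{ω₀}(x))`. -/
def Gmap {N : ℕ} {part : Fin N → Bool} (f : Fin N → ℝ → ℝ)
    (z : SigmaA N part × ℝ) : SigmaA N part × ℝ :=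
  (shiftA z.1, gmap f part (z.1.1 0) z.2)

/-- The 2-to-1 projection `Π : Σ_A × I → Σ_N × I`. -/
def PiMap {N : ℕ} {part : Fin N → Bool} (z : SigmaA N part × ℝ) : BSeq N × ℝ :=
  (piA z.1, if (z.1.1 0).2 then R z.2 else z.2)

/-- Orientation hypothesis: `part` records which fiber maps preserve orientation. -/
def OrientPart {N : ℕ} (f : Fin N → ℝ → ℝ) (part : Fin N → Bool) : Prop :=
  ∀ i, (part i = true → StrictMonoOn (f i) I01) ∧ (part i = false → StrictAntiOn (f i) I01)

/-!
An `A`-admissible sequence over `ξ ∈ Σ_N` is `n ↦ (ξ n, b n)` where the orientation bits obey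
`b (n + 1) = b n xor !part (ξ n)`. Each step is a bijection of `Bool`, so such a recurrence on `ℤ`
has exactly one solution through each value `b 0`; the two choices of `b 0` are the two
`π`-preimages of `ξ`.
-/

section StepOrbit

variable {α : Type*} (φ : ℤ → Equiv.Perm α)

/-- The solution of `x (n + 1) = φ n (x n)` on `ℤ` with `x 0 = a`. -/
def stepOrbit (a : α) : ℤ → α
  | Int.ofNat k => k.rec a fun k x => φ k x
  | Int.negSucc k => k.rec ((φ (-1)).symm a) fun k x => (φ (Int.negSucc (k + 1))).symm x

theorem stepOrbit_succ (a : α) (n : ℤ) : stepOrbit φ a (n + 1) = φ n (stepOrbit φ a n) := by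
  match n with
  | Int.ofNat k => rfl
  | Int.negSucc 0 => exact ((φ (-1)).apply_symm_apply a).symm
  | Int.negSucc (k + 1) =>
    exact ((φ (Int.negSucc (k + 1))).apply_symm_apply _).symm

theorem eq_stepOrbit {x : ℤ → α} (hx : ∀ n, x (n + 1) = φ n (x n)) : x = stepOrbit φ (x 0) := by
  funext n
  induction n using Int.induction_on with
  | zero => rfl
  | succ k ih => rw [hx, stepOrbit_succ, ih]
  | pred k ih =>
    apply (φ (-k - 1)).injective
    rw [← hx, ← stepOrbit_succ, sub_add_cancel, ih]

end StepOrbit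

section DoublingProjection

variable {N : ℕ} (part : Fin N → Bool)

theorem continuous_piA : Continuous (piA (N := N) (part := part)) :=
  continuous_pi fun n => ((continuous_apply n).comp continuous_subtype_val).fst

def orientationStep (ξ : BSeq N) (n : ℤ) : Equiv.Perm Bool :=
  Function.Involutive.toPerm (fun b => xor b (!part (ξ n))) fun b => by simp

def liftA (ξ : BSeq N) (b : Bool) : SigmaA N part :=
  ⟨fun n => (ξ n, stepOrbit (orientationStep part ξ) b n),
    stepOrbit_succ (orientationStep part ξ) b⟩

theorem piA_liftA (ξ : BSeq N) (b : Bool) : piA (liftA part ξ b) = ξ := rfl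

theorem liftA_injective (ξ : BSeq N) : Function.Injective (liftA part ξ) := fun _ _ h =>
  congrArg (fun ω : SigmaA N part => (ω.1 0).2) h

theorem eq_liftA_of_piA_eq {ω : SigmaA N part} {ξ : BSeq N} (h : piA ω = ξ) :
    ω = liftA part ξ (ω.1 0).2 := by
  subst h
  have hbits := eq_stepOrbit (orientationStep part (piA ω)) (x := fun n => (ω.1 n).2) ω.2
  exact Subtype.ext <| funext fun n => Prod.ext rfl (congrFun hbits n)

theorem piA_preimage_singleton (ξ : BSeq N) :
    piA ⁻¹' {ξ} = {liftA part ξ false, liftA part ξ true} := by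
  ext ω
  refine ⟨fun h => ?_, ?_⟩
  · rw [eq_liftA_of_piA_eq part h]
    cases (ω.1 0).2 <;> simp
  · rintro (rfl | rfl) <;> rfl

end DoublingProjection

/-- **Lemma (doubling projection).** `π : Σ_A → Σ_N` is a continuous surjective
semiconjugation between `σ_A` and `σ`, and every point of `Σ_N` has exactly two
`π`-preimages. -/
theorem piA_two_to_one_semiconjugation {N : ℕ} (part : Fin N → Bool) :
    Continuous (piA (N := N) (part := part)) ∧
    Function.Surjective (piA (N := N) (part := part)) ∧
    (∀ ω : SigmaA N part, piA (shiftA ω) = shiftSeq (piA ω)) ∧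
    (∀ ξ : BSeq N, ∃ ω₁ ω₂ : SigmaA N part, ω₁ ≠ ω₂ ∧
      piA (N := N) (part := part) ⁻¹' {ξ} = {ω₁, ω₂}) :=
  ⟨continuous_piA part, fun ξ => ⟨liftA part ξ false, piA_liftA part ξ false⟩, fun _ => rfl,
    fun ξ => ⟨liftA part ξ false, liftA part ξ true,
      (liftA_injective part ξ).ne Bool.false_ne_true, piA_preimage_singleton part ξ⟩⟩
end
end

section
/- (Extended skew-product semiconjugation) With $A$, $\Sigma_A$, $\pi$ as in the orientation-doubling construction, define fiber maps $g_i=f_i$ and $g_{i+N}=R\circ f_i\circ R$ for $i\in\mathcal I_P$, and $g_i=R\circ f_i$ and $g_{i+N}=f_i\circ R$ for $i\in\mathcal I_R$, where $R(x)=1-x$, and set $G(\omega,x)=(\sigma_A\omega,g_{\omega_0}(x))$. Let $C=\{\omega\in\Sigma_A:\omega_0\le N\}$ and define $\Pi(\omega,x)=(\bar\omega,x)$ if $\omega\in C$ and $(\bar\omega,R(x))$ otherwise, where $\bar\omega=\pi(\omega)$. Then $\Pi$ is a continuous surjective two-to-one map satisfying $\Pi\circ G=F\circ\Pi$. -/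
open Set Filter MeasureTheory Topology

noncomputable section

/-! The bits of an admissible sequence obey `b (n + 1) = xor (b n) (!part (ξ n))` over its
projection `ξ`, so an admissible sequence is determined by its projection and its bit at `0`,
and both bits occur. Hence every fiber of `π` has two points, which `Π` matches with `x` and
`R x`. The bit at `1` is the bit at `0` flipped exactly when `f_{ω₀}` reverses orientation,
which is how the `R`s in `g_{ω₀}` are placed, so `Π ∘ G = F ∘ Π`. -/

section Recurrence

variable {α : Type*}

theorem exists_recurrence (e : ℤ → Equiv.Perm α) (a : α) :
    ∃ b : ℤ → α, b 0 = a ∧ ∀ n, b (n + 1) = e n (b n) := by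
  let b : ℤ → α := fun n =>
    Int.inductionOn' (motive := fun _ => α) n 0 a (fun k _ x => e k x)
      (fun k _ x => (e (k - 1)).symm x)
  refine ⟨b, Int.inductionOn'_self, fun n => ?_⟩
  rcases le_or_gt 0 n with hn | hn
  · exact Int.inductionOn'_add_one hn
  · have h := Int.inductionOn'_sub_one (motive := fun _ => α) (zero := a)
      (succ := fun k _ x => e k x) (pred := fun k _ x => (e (k - 1)).symm x)
      (show n + 1 ≤ 0 by omega)
    simp only [add_sub_cancel_right] at h
    change b n = (e n).symm (b (n + 1)) at h
    rw [h, Equiv.apply_symm_apply]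

theorem eq_of_recurrence {e : ℤ → α → α} (he : ∀ n, Function.Injective (e n)) {b b' : ℤ → α}
    (hb : ∀ n, b (n + 1) = e n (b n)) (hb' : ∀ n, b' (n + 1) = e n (b' n)) (h0 : b 0 = b' 0) :
    b = b' := by
  funext n
  induction n using Int.induction_on with
  | zero => exact h0
  | succ k ih => rw [hb, hb', ih]
  | pred k ih =>
    apply he (-k - 1)
    rw [← hb, ← hb', sub_add_cancel, ih]

end Recurrence

section SigmaA

variable {N : ℕ} {part : Fin N → Bool}

def bitFlip (part : Fin N → Bool) (i : Fin N) : Equiv.Perm Bool :=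
  Function.Involutive.toPerm (fun b => xor b (!part i)) fun b => by simp

theorem exists_piA_eq (ξ : BSeq N) (c : Bool) :
    ∃ ω : SigmaA N part, piA ω = ξ ∧ (ω.1 0).2 = c := by
  obtain ⟨b, hb0, hb⟩ := exists_recurrence (fun n => bitFlip part (ξ n)) c
  exact ⟨⟨fun n => (ξ n, b n), hb⟩, rfl, hb0⟩

theorem eq_of_piA_eq {ω ω' : SigmaA N part} (h : piA ω = piA ω') (h0 : (ω.1 0).2 = (ω'.1 0).2) :
    ω = ω' := by
  have hbits : (fun n => (ω.1 n).2) = fun n => (ω'.1 n).2 :=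
    eq_of_recurrence (e := fun n => bitFlip part (piA ω n)) (fun n => (bitFlip _ _).injective)
      ω.2 (fun n => by rw [h]; exact ω'.2 n) h0
  exact Subtype.ext <| funext fun n => Prod.ext (congrFun h n) (congrFun hbits n)

end SigmaA

theorem R_R (x : ℝ) : R (R x) = x := sub_sub_cancel 1 x

theorem strictAnti_R : StrictAnti R := fun _ _ h => sub_lt_sub_left h 1

theorem continuous_R : Continuous R := continuous_const.sub continuous_id

theorem mapsTo_R : MapsTo R I01 I01 := fun _ ⟨h0, h1⟩ => ⟨sub_nonneg.2 h1, sub_le_self 1 h0⟩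

section PiMap

variable {N : ℕ} {part : Fin N → Bool}

theorem continuous_PiMap : Continuous (PiMap (N := N) (part := part)) := by
  have hseq : Continuous fun z : SigmaA N part × ℝ => z.1.1 :=
    continuous_subtype_val.comp continuous_fst
  have hbit : Continuous fun z : SigmaA N part × ℝ => (z.1.1 0).2 :=
    continuous_snd.comp ((continuous_apply 0).comp hseq)
  have hflip : Continuous fun p : Bool × ℝ => if p.1 then R p.2 else p.2 :=
    continuous_prod_of_discrete_left.2 fun
      | true => continuous_R
      | false => continuous_id
  exact .prodMk (continuous_pi fun n => continuous_fst.comp ((continuous_apply n).comp hseq))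
    (hflip.comp (hbit.prodMk continuous_snd))

theorem PiMap_eq_iff {ξ : BSeq N} {x : ℝ} {ω₀ ω₁ : SigmaA N part}
    (h₀ : piA ω₀ = ξ) (hb₀ : (ω₀.1 0).2 = false) (h₁ : piA ω₁ = ξ) (hb₁ : (ω₁.1 0).2 = true)
    (w : SigmaA N part × ℝ) : PiMap w = (ξ, x) ↔ w = (ω₀, x) ∨ w = (ω₁, R x) := by
  obtain ⟨ω, y⟩ := w
  simp only [PiMap, Prod.mk.injEq]
  cases hb : (ω.1 0).2
  · simp only [Bool.false_eq_true, ↓reduceIte]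
    constructor
    · rintro ⟨hω, rfl⟩
      exact .inl ⟨eq_of_piA_eq (hω.trans h₀.symm) (hb.trans hb₀.symm), rfl⟩
    · rintro (⟨rfl, rfl⟩ | ⟨rfl, -⟩)
      · exact ⟨h₀, rfl⟩
      · exact absurd (hb.symm.trans hb₁) Bool.false_ne_true
  · simp only [↓reduceIte]
    constructor
    · rintro ⟨hω, rfl⟩
      exact .inr ⟨eq_of_piA_eq (hω.trans h₁.symm) (hb.trans hb₁.symm), (R_R y).symm⟩
    · rintro (⟨rfl, -⟩ | ⟨rfl, rfl⟩)
      · exact absurd (hb₀.symm.trans hb) Bool.false_ne_true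
      · exact ⟨h₁, R_R x⟩

theorem PiMap_Gmap (f : Fin N → ℝ → ℝ) (w : SigmaA N part × ℝ) :
    PiMap (Gmap f w) = Fmap f (PiMap w) := by
  obtain ⟨ω, x⟩ := w
  have hbit : (ω.1 1).2 = xor (ω.1 0).2 (!part (ω.1 0).1) := ω.2 0
  refine Prod.ext rfl ?_
  simp only [PiMap, Gmap, Fmap, shiftA, shiftSeq, piA, zero_add, hbit, gmap]
  cases hp : part (ω.1 0).1 <;> cases hb : (ω.1 0).2 <;> simp [R_R]

end PiMap

theorem strictMonoOn_gmap {N : ℕ} {f : Fin N → ℝ → ℝ} {part : Fin N → Bool}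
    (hor : OrientPart f part) (s : DSym N) : StrictMonoOn (gmap f part s) I01 := by
  obtain ⟨i, b⟩ := s
  cases hp : part i <;> cases b <;> simp only [gmap, hp, Bool.false_eq_true, ↓reduceIte]
  · exact strictAnti_R.comp_strictAntiOn ((hor i).2 hp)
  · exact ((hor i).2 hp).comp (strictAnti_R.strictAntiOn I01) mapsTo_R
  · exact (hor i).1 hp
  · exact strictAnti_R.comp_strictAntiOn
      (((hor i).1 hp).comp_strictAntiOn (strictAnti_R.strictAntiOn I01) mapsTo_R)

theorem PiMap_two_to_one_semiconjugation_general {N : ℕ} (f : Fin N → ℝ → ℝ)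
    (part : Fin N → Bool) (hor : OrientPart f part) :
    Continuous (PiMap (N := N) (part := part)) ∧
    Function.Surjective (PiMap (N := N) (part := part)) ∧
    (∀ z : BSeq N × ℝ, ∃ w₁ w₂ : SigmaA N part × ℝ, w₁ ≠ w₂ ∧
      PiMap (N := N) (part := part) ⁻¹' {z} = {w₁, w₂}) ∧
    (∀ w : SigmaA N part × ℝ, PiMap (Gmap f w) = Fmap f (PiMap w)) ∧
    (∀ s : DSym N, StrictMonoOn (gmap f part s) I01) := by
  have fiber : ∀ z : BSeq N × ℝ, ∃ w₁ w₂ : SigmaA N part × ℝ, w₁ ≠ w₂ ∧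
      PiMap (N := N) (part := part) ⁻¹' {z} = {w₁, w₂} := by
    rintro ⟨ξ, x⟩
    obtain ⟨ω₀, h₀, hb₀⟩ := exists_piA_eq (part := part) ξ false
    obtain ⟨ω₁, h₁, hb₁⟩ := exists_piA_eq (part := part) ξ true
    refine ⟨(ω₀, x), (ω₁, R x), fun h => ?_, Set.ext (PiMap_eq_iff h₀ hb₀ h₁ hb₁)⟩
    exact Bool.false_ne_true (hb₀.symm.trans ((congrArg (fun w => (w.1.1 0).2) h).trans hb₁))
  refine ⟨continuous_PiMap, fun z => ?_, fiber, PiMap_Gmap f, strictMonoOn_gmap hor⟩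
  obtain ⟨w, _, -, hz⟩ := fiber z
  have hw : w ∈ PiMap ⁻¹' {z} := hz ▸ Set.mem_insert w _
  exact ⟨w, hw⟩

/-- **Lemma (extended skew-product semiconjugation).** `Π` is a continuous surjective
two-to-one map with `Π ∘ G = F ∘ Π`; all fiber maps of `G` preserve orientation. -/
theorem PiMap_two_to_one_semiconjugation {N : ℕ} (f : Fin N → ℝ → ℝ)
    (part : Fin N → Bool) (hor : OrientPart f part)
    (hinj : ∀ i, Set.InjOn (f i) I01)
    (hmap : ∀ i, Set.MapsTo (f i) I01 I01) :
    Continuous (PiMap (N := N) (part := part)) ∧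
    Function.Surjective (PiMap (N := N) (part := part)) ∧
    (∀ z : BSeq N × ℝ, ∃ w₁ w₂ : SigmaA N part × ℝ, w₁ ≠ w₂ ∧
      PiMap (N := N) (part := part) ⁻¹' {z} = {w₁, w₂}) ∧
    (∀ w : SigmaA N part × ℝ, PiMap (Gmap f w) = Fmap f (PiMap w)) ∧
    (∀ s : DSym N, StrictMonoOn (gmap f part s) I01) :=
  PiMap_two_to_one_semiconjugation_general f part hor
end
end

section
/- (Symmetry of maximal fibers) With the extended step skew-product $G$ over $\Sigma_A$ as constructed, set $I_\omega=\bigcap_{n\ge1}g_{\omega_{-n}\cdots\omega_{-1}}(I)$ for $\omega\in\Sigma_A$ and $I_{\bar\omega}=\bigcap_{n\ge1}f_{\bar\omega_{-n}\cdots\bar\omega_{-1}}(I)$ for $\bar\omega=\pi(\omega)\in\Sigma_N$. Then $I_\omega=I_{\bar\omega}$ whenever $\omega_0\le N$, and $I_\omega=R(I_{\bar\omega})$ whenever $\omega_0>N$, where $R(x)=1-x$. -/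
open Set Filter MeasureTheory Topology

noncomputable section

/-- Backward composition image: `h_{ω_{-1}} ∘ ⋯ ∘ h_{ω_{-n}} (I)`. -/
def bwImg {α : Type*} (h : α → ℝ → ℝ) (ω : ℤ → α) (n : ℕ) : Set ℝ :=
  fw h (fun j => ω (j - (n : ℤ))) n '' I01

/-- The maximal fiber over `ω`: `I_ω = ⋂_{n≥1} h_{ω_{-1}⋯ω_{-n}}(I)`. -/
def maxFiber {α : Type*} (h : α → ℝ → ℝ) (ω : ℤ → α) : Set ℝ :=
  ⋂ n : ℕ, bwImg h ω (n + 1)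

/-!
Along an admissible `ω` the bit `b_n = (ω n).2` records whether the fiber over `ω_n` is reflected:
the transition rule `b_{n+1} = b_n xor (f_{ω_n} reverses orientation)` is exactly what makes
`g_{ω_n} ∘ R^{b_n} = R^{b_{n+1}} ∘ f_{π(ω)_n}`. Telescoping, every backward composition of the `g`'s
equals `R^{b_0} ∘ f_{π(ω)_{-1}} ∘ ⋯ ∘ f_{π(ω)_{-n}} ∘ R^{b_{-n}}`, and `R^{b_{-n}}` maps `I` onto itself, so
`I_ω = R^{b_0}(I_{π(ω)})`.
-/

def reflectIf (b : Bool) : ℝ → ℝ := if b then R else id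

lemma R_involutive : Function.Involutive R := fun x => by simp [R]

lemma reflectIf_involutive (b : Bool) : Function.Involutive (reflectIf b) := by
  cases b
  exacts [fun _ => rfl, R_involutive]

lemma R_image_I01 : R '' I01 = I01 := by
  rw [I01, show R = fun x => 1 - x from rfl, image_const_sub_Icc]
  norm_num

lemma reflectIf_image_I01 (b : Bool) : reflectIf b '' I01 = I01 := by
  cases b
  exacts [image_id I01, R_image_I01]

lemma fw_semiconj {α β : Type*} {h : α → ℝ → ℝ} {k : β → ℝ → ℝ} {ξ : ℤ → α} {η : ℤ → β}
    {c : ℤ → ℝ → ℝ} (hc : ∀ (j : ℕ) x, h (ξ j) (c j x) = c (j + 1) (k (η j) x)) :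
    ∀ (n : ℕ) (x : ℝ), fw h ξ n (c 0 x) = c n (fw k η n x)
  | 0, _ => rfl
  | n + 1, x => by
    simp only [fw]
    rw [fw_semiconj hc n x, hc n]
    push_cast
    rfl

lemma bwImg_eq_image_of_semiconj {α β : Type*} {h : α → ℝ → ℝ} {k : β → ℝ → ℝ} {ξ : ℤ → α}
    {η : ℤ → β} {c : ℤ → ℝ → ℝ} (hc : ∀ (j : ℤ) x, h (ξ j) (c j x) = c (j + 1) (k (η j) x))
    (n : ℕ) (hI : c (-n) '' I01 = I01) :
    bwImg h ξ n = c 0 '' bwImg k η n := by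
  have hshift : ∀ (j : ℕ) x, h (ξ (j - n)) (c (j - n) x) = c (j + 1 - n) (k (η (j - n)) x) :=
    fun j x => by rw [hc, sub_add_eq_add_sub]
  have hfw := fw_semiconj (ξ := fun j => ξ (j - n)) (η := fun j => η (j - n))
    (c := fun j => c (j - n)) hshift n
  simp only [zero_sub, sub_self] at hfw
  calc bwImg h ξ n = fw h (fun j => ξ (j - n)) n '' (c (-n) '' I01) := by rw [bwImg, hI]
    _ = c 0 '' bwImg k η n := by simp only [bwImg, image_image, hfw]

lemma gmap_reflectIf {N : ℕ} (f : Fin N → ℝ → ℝ) (part : Fin N → Bool) (s : DSym N) (x : ℝ) :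
    gmap f part s (reflectIf s.2 x) = reflectIf (xor s.2 !part s.1) (f s.1 x) := by
  rcases s with ⟨i, b⟩
  cases hp : part i <;> cases b <;> simp [gmap, reflectIf, hp, R_involutive x]

lemma maxFiber_gmap {N : ℕ} (f : Fin N → ℝ → ℝ) (part : Fin N → Bool) (ω : SigmaA N part) :
    maxFiber (gmap f part) ω.1 = reflectIf (ω.1 0).2 '' maxFiber f (piA ω) := by
  have hstep : ∀ (j : ℤ) x, gmap f part (ω.1 j) (reflectIf (ω.1 j).2 x) =
      reflectIf (ω.1 (j + 1)).2 (f (piA ω j) x) := fun j x => by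
    rw [gmap_reflectIf, ω.2 j]
    rfl
  rw [maxFiber, maxFiber, image_iInter (reflectIf_involutive _).bijective]
  exact iInter_congr fun n => bwImg_eq_image_of_semiconj hstep (n + 1) (reflectIf_image_I01 _)

theorem maxFiber_symmetry_general {N : ℕ} (f : Fin N → ℝ → ℝ)
    (part : Fin N → Bool) :
    ∀ ω : SigmaA N part,
      ((ω.1 0).2 = false → maxFiber (gmap f part) ω.1 = maxFiber f (piA ω)) ∧
      ((ω.1 0).2 = true → maxFiber (gmap f part) ω.1 = R '' maxFiber f (piA ω)) := by
  intro ω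
  rw [maxFiber_gmap]
  constructor <;> intro h <;> simp [h, reflectIf]

/-- **Lemma (symmetry of maximal fibers).** `I_ω = I_{π(ω)}` when `ω₀ ≤ N`,
and `I_ω = R(I_{π(ω)})` when `ω₀ > N`. -/
theorem maxFiber_symmetry {N : ℕ} (f : Fin N → ℝ → ℝ)
    (part : Fin N → Bool) (hor : OrientPart f part)
    (hcont : ∀ i, Continuous (f i))
    (hinj : ∀ i, Set.InjOn (f i) I01)
    (habs : ∀ i, Set.MapsTo (f i) I01 (interior I01)) :
    ∀ ω : SigmaA N part,
      ((ω.1 0).2 = false → maxFiber (gmap f part) ω.1 = maxFiber f (piA ω)) ∧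
      ((ω.1 0).2 = true → maxFiber (gmap f part) ω.1 = R '' maxFiber f (piA ω)) :=
  maxFiber_symmetry_general f part
end
end

section
/- (Unique symmetric Markov extension) Every Markov measure $\lambda_0$ on $\Sigma_N$ admits a unique symmetric Markov extension $\lambda$ on $\Sigma_A$, i.e. a unique Markov measure $\lambda$ on $\Sigma_A$ with $\pi_*\lambda=\lambda_0$ whose probability vector $(p_i)$ and stochastic matrix $(P_{ij})$ satisfy $p_i=p_{i+N}$, $P_{ij}=P_{(i+N)(j+N)}$ and $P_{i(j+N)}=P_{(i+N)j}$ for all $i,j\in\{1,\dots,N\}$. -/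
open Set Filter MeasureTheory Topology

noncomputable section

open scoped ENNReal

/-- The cylinder `[m; w₀ … w_k]`. -/
def cylinder {α : Type*} (m : ℤ) (k : ℕ) (w : ℕ → α) : Set (ℤ → α) :=
  {η | ∀ i : ℕ, i ≤ k → η (m + i) = w i}

/-- `lam` is the Markov measure with probability vector `p` and transition matrix `P`. -/
def IsMarkov {α : Type*} [MeasurableSpace α] (lam : MeasureTheory.Measure (ℤ → α))
    (p : α → ℝ≥0∞) (P : α → α → ℝ≥0∞) : Prop :=
  ∀ (m : ℤ) (k : ℕ) (w : ℕ → α),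
    lam (cylinder m k w) = p (w 0) * ∏ i ∈ Finset.range k, P (w i) (w (i + 1))

/-- Stochasticity and stationarity of the pair `(p, P)`. -/
def IsStochastic {α : Type*} [Fintype α] (p : α → ℝ≥0∞) (P : α → α → ℝ≥0∞) : Prop :=
  (∑ a, p a) = 1 ∧ (∀ a, (∑ b, P a b) = 1) ∧ (∀ b, (∑ a, p a * P a b) = p b)

/-- Symmetry of a Markov pair on the doubled alphabet: `p_i = p_{i+N}`,
`P_{ij} = P_{(i+N)(j+N)}` and `P_{i(j+N)} = P_{(i+N)j}`. -/
def SymMarkov {N : ℕ} (p : DSym N → ℝ≥0∞) (P : DSym N → DSym N → ℝ≥0∞) : Prop :=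
  (∀ s : DSym N, p s = p (s.1, !s.2)) ∧
  (∀ s t : DSym N, P s t = P (s.1, !s.2) (t.1, !t.2))

/-- Compatibility of the transition matrix with the admissibility matrix `A`. -/
def CompatA {N : ℕ} (part : Fin N → Bool) (P : DSym N → DSym N → ℝ≥0∞) : Prop :=
  ∀ s t : DSym N, t.2 ≠ xor s.2 (!(part s.1)) → P s t = 0

/-- Projection of doubled sequences to `Σ_N`. -/
def projSeq {N : ℕ} (ω : ℤ → DSym N) : BSeq N := fun n => (ω n).1

/-!
A measure `λ` on `(Fin N × Bool)^ℤ` that lives on `Σ_A` and is invariant under flipping every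
orientation bit is determined by `π_* λ`: an admissible word `w` and its flip `w̄` are the only
admissible lifts of the word `π w`, so `λ[w] = λ[w̄] = (π_* λ)[π w] / 2`, while non-admissible
cylinders are null. A symmetric Markov extension has both properties (compatibility with `A` and
symmetry of `(p, P)`), which gives uniqueness. For existence, average the images of `λ₀` under the
two lifts `ξ ↦ ω` with `π ω = ξ` and prescribed orientation bit at time `0`.
-/

namespace DoubledShift

section Cylinders

variable {α : Type*}

theorem restrict_Icc_preimage_singleton (m : ℤ) (k : ℕ) (η₀ : ℤ → α) :
    (Finset.Icc m (m + k)).restrict (π := fun _ => α) ⁻¹' {(Finset.Icc m (m + k)).restrict η₀} =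
      cylinder m k (fun i => η₀ (m + i)) := by
  ext η
  simp only [Set.mem_preimage, Set.mem_singleton_iff, funext_iff, Subtype.forall,
    Finset.restrict, Finset.mem_Icc, _root_.cylinder, Set.mem_ofPred_eq]
  constructor
  · intro h i hi
    exact h _ ⟨by omega, by omega⟩
  · intro h j hj
    obtain ⟨i, rfl⟩ : ∃ i : ℕ, j = m + i := ⟨(j - m).toNat, by omega⟩
    exact h i (by omega)

theorem preimage_comp_cylinder {e : α → α} (he : Function.Involutive e) (m : ℤ) (k : ℕ)
    (w : ℕ → α) : (e ∘ ·) ⁻¹' cylinder m k w = cylinder m k (e ∘ w) := by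
  ext η
  simp only [Set.mem_preimage, _root_.cylinder, Set.mem_ofPred_eq, Function.comp_apply,
    he.eq_iff]

variable [MeasurableSpace α] [MeasurableSingletonClass α]

theorem measurableSet_cylinder (m : ℤ) (k : ℕ) (w : ℕ → α) :
    MeasurableSet (cylinder m k w) := by
  simp_rw [_root_.cylinder, Set.ofPred_forall]
  exact .iInter fun i => .iInter fun _ => measurable_pi_apply _ (measurableSet_singleton _)

variable [Countable α]

theorem map_restrict_Icc_eq {μ ν : Measure (ℤ → α)}
    (h : ∀ m k w, μ (cylinder m k w) = ν (cylinder m k w)) (m : ℤ) (k : ℕ) :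
    μ.map (Finset.Icc m (m + k)).restrict = ν.map (Finset.Icc m (m + k)).restrict := by
  have hrestrict := Finset.measurable_restrict (X := fun _ : ℤ => α) (Finset.Icc m (m + k))
  refine Measure.ext_of_singleton fun v => ?_
  rw [Measure.map_apply hrestrict (measurableSet_singleton v),
    Measure.map_apply hrestrict (measurableSet_singleton v)]
  rcases (Finset.Icc m (m + k)).restrict (π := fun _ => α) ⁻¹' {v} |>.eq_empty_or_nonempty
    with hv | ⟨η₀, rfl⟩
  · rw [hv, measure_empty, measure_empty]
  · rw [restrict_Icc_preimage_singleton]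
    exact h _ _ _

theorem ext_of_cylinder {μ ν : Measure (ℤ → α)} [IsFiniteMeasure μ] [IsFiniteMeasure ν]
    (h : ∀ m k w, μ (cylinder m k w) = ν (cylinder m k w)) : μ = ν := by
  have hlim : IsProjectiveLimit ν fun J => μ.map J.restrict := by
    intro J
    set B : ℕ := J.sup Int.natAbs
    have hJ : J ⊆ Finset.Icc (-B : ℤ) (-B + (2 * B : ℕ)) := fun j hj => by
      have := Finset.le_sup (f := Int.natAbs) hj
      simp only [Finset.mem_Icc]
      omega
    simp only [← Finset.restrict₂_comp_restrict hJ]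
    rw [← Measure.map_map (Finset.measurable_restrict₂ hJ) (Finset.measurable_restrict _),
      ← Measure.map_map (Finset.measurable_restrict₂ hJ) (Finset.measurable_restrict _),
      map_restrict_Icc_eq h]
  exact IsProjectiveLimit.unique (fun J => rfl) hlim

end Cylinders

variable {N : ℕ} {part : Fin N → Bool}

def flipBit (s : DSym N) : DSym N := (s.1, !s.2)

theorem flipBit_involutive : Function.Involutive (flipBit (N := N)) := fun s => by
  simp [flipBit]

theorem measurable_flipBit_comp : Measurable fun η : ℤ → DSym N => flipBit ∘ η :=
  measurable_pi_lambda _ fun n => (Measurable.of_discrete (f := flipBit)).comp (measurable_pi_apply n)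

theorem measurable_projSeq : Measurable (projSeq (N := N)) :=
  measurable_pi_lambda _ fun n => measurable_fst.comp (measurable_pi_apply n)

theorem measurableSet_admissible : MeasurableSet {η : ℤ → DSym N | Admissible part η} := by
  simp_rw [Admissible, Set.ofPred_forall]
  exact .iInter fun n => measurableSet_eq_fun (measurable_snd.comp (measurable_pi_apply _))
    ((Measurable.of_discrete (f := fun s : DSym N => xor s.2 (!part s.1))).comp
      (measurable_pi_apply n))

def IsAdmissibleWord (part : Fin N → Bool) (k : ℕ) (w : ℕ → DSym N) : Prop :=
  ∀ i < k, (w (i + 1)).2 = xor (w i).2 (!part (w i).1)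

theorem IsAdmissibleWord.flipBit_comp {k : ℕ} {w : ℕ → DSym N}
    (hw : IsAdmissibleWord part k w) : IsAdmissibleWord part k (flipBit ∘ w) := fun i hi => by
  simp [flipBit, hw i hi]

theorem isAdmissibleWord_of_mem_cylinder {η : ℤ → DSym N} {m : ℤ} {k : ℕ} {w : ℕ → DSym N}
    (hη : Admissible part η) (h : η ∈ cylinder m k w) : IsAdmissibleWord part k w := fun i hi => by
  rw [← h i hi.le, ← h (i + 1) hi, Nat.cast_succ, ← add_assoc]
  exact hη _

theorem mem_cylinder_of_admissible {η : ℤ → DSym N} {m : ℤ} {k : ℕ} {w : ℕ → DSym N}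
    (hη : Admissible part η) (hw : IsAdmissibleWord part k w)
    (hproj : projSeq η ∈ cylinder m k (Prod.fst ∘ w)) (hbit : (η m).2 = (w 0).2) :
    η ∈ cylinder m k w := by
  intro i hi
  refine Prod.ext (hproj i hi) ?_
  induction i with
  | zero => simpa using hbit
  | succ i ih =>
    rw [Nat.cast_succ, ← add_assoc, hη, ih (by omega), hw i (by omega)]
    congr 2
    exact congrArg part (hproj i (by omega))

section Determination

variable {μ ν : Measure (ℤ → DSym N)}

theorem isFiniteMeasure_of_map_projSeq {μ₀ : Measure (BSeq N)} [IsFiniteMeasure μ₀]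
    (h : μ.map projSeq = μ₀) : IsFiniteMeasure μ :=
  have : IsFiniteMeasure (μ.map projSeq) := h ▸ ‹_›
  Measure.isFiniteMeasure_of_map measurable_projSeq.aemeasurable

theorem measure_cylinder_eq_zero (hadm : ∀ᵐ η ∂μ, Admissible part η) {m : ℤ} {k : ℕ}
    {w : ℕ → DSym N} (hw : ¬IsAdmissibleWord part k w) : μ (cylinder m k w) = 0 :=
  measure_mono_null (fun _ hη hadmη => hw (isAdmissibleWord_of_mem_cylinder hadmη hη))
    (ae_iff.mp hadm)

/-- Up to a null set, `π⁻¹[v]` is the disjoint union of the two admissible lifts of `v`, which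
differ by `flipBit`; flip invariance gives them equal mass. -/
theorem two_mul_measure_cylinder (hadm : ∀ᵐ η ∂μ, Admissible part η)
    (hflip : μ.map (flipBit ∘ ·) = μ) {m : ℤ} {k : ℕ} {w : ℕ → DSym N}
    (hw : IsAdmissibleWord part k w) :
    2 * μ (cylinder m k w) = μ.map projSeq (cylinder m k (Prod.fst ∘ w)) := by
  have hsplit : projSeq ⁻¹' cylinder m k (Prod.fst ∘ w) =ᵐ[μ]
      (cylinder m k w ∪ cylinder m k (flipBit ∘ w) : Set _) := by
    refine Filter.eventuallyEq_set.2 (hadm.mono fun η hη => ⟨fun hproj => ?_, ?_⟩)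
    · rcases Bool.eq_or_eq_not (η m).2 (w 0).2 with hbit | hbit
      · exact .inl (mem_cylinder_of_admissible hη hw hproj hbit)
      · exact .inr (mem_cylinder_of_admissible hη hw.flipBit_comp hproj hbit)
    · rintro (h | h) i hi <;> exact (congrArg Prod.fst (h i hi) :)
  have hdisj : Disjoint (cylinder m k w) (cylinder m k (flipBit ∘ w)) :=
    Set.disjoint_left.2 fun η h h' => by
      have := (h 0 k.zero_le).symm.trans (h' 0 k.zero_le)
      simp [flipBit, Prod.ext_iff] at this
  have hsym : μ (cylinder m k (flipBit ∘ w)) = μ (cylinder m k w) := by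
    rw [← preimage_comp_cylinder flipBit_involutive,
      ← Measure.map_apply measurable_flipBit_comp (measurableSet_cylinder _ _ _), hflip]
  rw [Measure.map_apply measurable_projSeq (measurableSet_cylinder _ _ _), measure_congr hsplit,
    measure_union hdisj (measurableSet_cylinder _ _ _), hsym, two_mul]

theorem eq_of_map_projSeq_eq [IsFiniteMeasure μ] [IsFiniteMeasure ν]
    (hμ : ∀ᵐ η ∂μ, Admissible part η) (hν : ∀ᵐ η ∂ν, Admissible part η)
    (hμflip : μ.map (flipBit ∘ ·) = μ) (hνflip : ν.map (flipBit ∘ ·) = ν)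
    (h : μ.map projSeq = ν.map projSeq) : μ = ν := by
  refine ext_of_cylinder fun m k w => ?_
  by_cases hw : IsAdmissibleWord part k w
  · refine (ENNReal.mul_right_inj two_ne_zero ENNReal.ofNat_ne_top).1 ?_
    rw [two_mul_measure_cylinder hμ hμflip hw, two_mul_measure_cylinder hν hνflip hw, h]
  · rw [measure_cylinder_eq_zero hμ hw, measure_cylinder_eq_zero hν hw]

end Determination

section Markov

variable {μ : Measure (ℤ → DSym N)} {p : DSym N → ℝ≥0∞} {P : DSym N → DSym N → ℝ≥0∞}

theorem _root_.IsMarkov.ae_admissible (hM : IsMarkov μ p P) (hC : CompatA part P) :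
    ∀ᵐ η ∂μ, Admissible part η := by
  have hstep (n : ℤ) : μ {η | (η (n + 1)).2 ≠ xor (η n).2 (!part (η n).1)} = 0 := by
    let bad : Set (DSym N × DSym N) := {st | st.2.2 ≠ xor st.1.2 (!part st.1.1)}
    refine measure_mono_null (t := ⋃ st ∈ bad, cylinder n 1 fun i => if i = 0 then st.1 else st.2)
      (fun η hη => Set.mem_biUnion (x := (η n, η (n + 1))) hη fun i hi => ?_)
      ((measure_biUnion_null_iff (Set.to_countable bad)).2 fun st hst => ?_)
    · interval_cases i <;> simp
    · rw [hM]
      simp [hC st.1 st.2 hst]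
  simp only [ae_iff, Admissible, not_forall, Set.ofPred_exists]
  exact measure_iUnion_null hstep

theorem _root_.IsMarkov.map_flipBit_comp [IsFiniteMeasure μ] (hM : IsMarkov μ p P)
    (hS : SymMarkov p P) : μ.map (flipBit ∘ ·) = μ := by
  refine ext_of_cylinder fun m k w => ?_
  rw [Measure.map_apply measurable_flipBit_comp (measurableSet_cylinder _ _ _),
    preimage_comp_cylinder flipBit_involutive, hM, hM]
  congr 1
  · exact (hS.1 _).symm
  · exact Finset.prod_congr rfl fun i _ => (hS.2 _ _).symm

end Markov

section Lift

/-- The solution of `x (n + 1) = xor (x n) (c n)` with `x 0 = false`. -/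
def cumXor (c : ℤ → Bool) (n : ℤ) : Bool :=
  Int.inductionOn' (motive := fun _ => Bool) n 0 false (fun k _ x => xor x (c k))
    fun k _ x => xor x (c (k - 1))

theorem cumXor_zero (c : ℤ → Bool) : cumXor c 0 = false :=
  Int.inductionOn'_self

theorem cumXor_add_one (c : ℤ → Bool) (n : ℤ) : cumXor c (n + 1) = xor (cumXor c n) (c n) := by
  rcases le_or_gt 0 n with hn | hn
  · exact Int.inductionOn'_add_one hn
  · have h : cumXor c (n + 1 - 1) = xor (cumXor c (n + 1)) (c (n + 1 - 1)) :=
      Int.inductionOn'_sub_one (by omega)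
    rw [add_sub_cancel_right] at h
    rw [h, Bool.xor_assoc, Bool.xor_self, Bool.xor_false]

theorem cumXor_sub_one (c : ℤ → Bool) (n : ℤ) :
    cumXor c (n - 1) = xor (cumXor c n) (c (n - 1)) := by
  rw [← sub_add_cancel n 1, cumXor_add_one, add_sub_cancel_right, Bool.xor_assoc, Bool.xor_self,
    Bool.xor_false]

theorem measurable_cumXor {X : Type*} [MeasurableSpace X] {c : X → ℤ → Bool}
    (hc : ∀ k, Measurable fun x => c x k) (n : ℤ) : Measurable fun x => cumXor (c x) n := by
  have hxor : Measurable fun q : Bool × Bool => xor q.1 q.2 := .of_discrete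
  induction n using Int.induction_on with
  | zero => simp only [cumXor_zero, measurable_const]
  | succ k ih =>
    simp only [cumXor_add_one]
    exact hxor.comp (ih.prodMk (hc k))
  | pred k ih =>
    simp only [cumXor_sub_one]
    exact hxor.comp (ih.prodMk (hc _))

/-- The admissible lift of `ξ` whose orientation bit at time `0` is `b`. -/
def liftSeq (part : Fin N → Bool) (b : Bool) (ξ : BSeq N) : ℤ → DSym N :=
  fun n => (ξ n, xor b (cumXor (fun k => !part (ξ k)) n))

theorem admissible_liftSeq (b : Bool) (ξ : BSeq N) : Admissible part (liftSeq part b ξ) :=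
  fun n => by simp only [liftSeq, cumXor_add_one, Bool.xor_assoc]

theorem measurable_liftSeq (b : Bool) : Measurable (liftSeq (N := N) part b) :=
  measurable_pi_lambda _ fun n => (measurable_pi_apply n).prodMk <|
    (Measurable.of_discrete (f := xor b)).comp <| measurable_cumXor (fun k =>
      (Measurable.of_discrete (f := fun i => !part i)).comp (measurable_pi_apply k)) n

theorem projSeq_comp_liftSeq (b : Bool) : projSeq ∘ liftSeq (N := N) part b = id := rfl

theorem flipBit_comp_liftSeq (b : Bool) :
    (flipBit ∘ ·) ∘ liftSeq (N := N) part b = liftSeq part (!b) := by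
  funext ξ n
  simp [flipBit, liftSeq]

end Lift

def symVec (p0 : Fin N → ℝ≥0∞) : DSym N → ℝ≥0∞ := fun s => p0 s.1 / 2

variable (part) in
def symMatrix (P0 : Fin N → Fin N → ℝ≥0∞) : DSym N → DSym N → ℝ≥0∞ :=
  fun s t => if t.2 = xor s.2 (!part s.1) then P0 s.1 t.1 else 0

theorem _root_.IsStochastic.symVec_symMatrix {p0 : Fin N → ℝ≥0∞} {P0 : Fin N → Fin N → ℝ≥0∞}
    (h : IsStochastic p0 P0) : IsStochastic (symVec p0) (symMatrix part P0) := by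
  obtain ⟨hsum, hrow, hstat⟩ := h
  refine ⟨?_, fun s => ?_, fun t => ?_⟩
  · simp only [Fintype.sum_prod_type, Fintype.sum_bool, symVec, ENNReal.add_halves, hsum]
  · simp only [Fintype.sum_prod_type, symMatrix, Fintype.sum_ite_eq', hrow]
  · calc ∑ s, symVec p0 s * symMatrix part P0 s t
        = ∑ i, p0 i * P0 i t.1 * 2⁻¹ := by
          simp only [Fintype.sum_prod_type, Fintype.sum_bool, symVec, symMatrix]
          refine Finset.sum_congr rfl fun i _ => ?_
          cases part i <;> cases t.2 <;> simp [div_eq_mul_inv, mul_right_comm]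
      _ = symVec p0 t := by rw [← Finset.sum_mul, hstat, symVec, div_eq_mul_inv]

theorem compatA_symMatrix (P0 : Fin N → Fin N → ℝ≥0∞) : CompatA part (symMatrix part P0) :=
  fun _ _ h => if_neg h

theorem symMarkov_symVec_symMatrix (p0 : Fin N → ℝ≥0∞) (P0 : Fin N → Fin N → ℝ≥0∞) :
    SymMarkov (symVec p0) (symMatrix part P0) := by
  refine ⟨fun _ => rfl, fun s t => ?_⟩
  simp only [symMatrix, Bool.not_xor, Bool.not_inj_iff]

section SymmetricLift

variable (part) in
def symLift (lam0 : Measure (BSeq N)) : Measure (ℤ → DSym N) :=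
  (2⁻¹ : ℝ≥0∞) • (lam0.map (liftSeq part false) + lam0.map (liftSeq part true))

variable (lam0 : Measure (BSeq N))

theorem map_projSeq_symLift : (symLift part lam0).map projSeq = lam0 := by
  rw [symLift, Measure.map_smul, Measure.map_add _ _ measurable_projSeq,
    Measure.map_map measurable_projSeq (measurable_liftSeq _),
    Measure.map_map measurable_projSeq (measurable_liftSeq _), projSeq_comp_liftSeq,
    projSeq_comp_liftSeq, Measure.map_id, ← two_smul ℝ≥0∞ lam0, smul_smul,
    ENNReal.inv_mul_cancel two_ne_zero ENNReal.ofNat_ne_top, one_smul]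

instance [IsFiniteMeasure lam0] : IsFiniteMeasure (symLift part lam0) :=
  isFiniteMeasure_of_map_projSeq (map_projSeq_symLift lam0)

theorem map_flipBit_comp_symLift : (symLift part lam0).map (flipBit ∘ ·) = symLift part lam0 := by
  rw [symLift, Measure.map_smul, Measure.map_add _ _ measurable_flipBit_comp,
    Measure.map_map measurable_flipBit_comp (measurable_liftSeq _),
    Measure.map_map measurable_flipBit_comp (measurable_liftSeq _), flipBit_comp_liftSeq,
    flipBit_comp_liftSeq, Bool.not_false, Bool.not_true, add_comm]

theorem ae_admissible_symLift : ∀ᵐ η ∂symLift part lam0, Admissible part η := by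
  have hlift (b : Bool) : ∀ᵐ η ∂lam0.map (liftSeq part b), Admissible part η :=
    (ae_map_iff (measurable_liftSeq b).aemeasurable measurableSet_admissible).2
      (ae_of_all _ (admissible_liftSeq b))
  exact Measure.ae_smul_measure (ae_add_measure_iff.2 ⟨hlift false, hlift true⟩) _

theorem isMarkov_symLift [IsFiniteMeasure lam0] {p0 : Fin N → ℝ≥0∞} {P0 : Fin N → Fin N → ℝ≥0∞}
    (h0 : IsMarkov lam0 p0 P0) : IsMarkov (symLift part lam0) (symVec p0) (symMatrix part P0) := by
  intro m k w
  by_cases hw : IsAdmissibleWord part k w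
  · have h2 := two_mul_measure_cylinder (ae_admissible_symLift lam0)
      (map_flipBit_comp_symLift lam0) hw (m := m)
    rw [map_projSeq_symLift, h0] at h2
    have hprod : ∏ i ∈ Finset.range k, symMatrix part P0 (w i) (w (i + 1)) =
        ∏ i ∈ Finset.range k, P0 (w i).1 (w (i + 1)).1 :=
      Finset.prod_congr rfl fun i hi => if_pos (hw i (Finset.mem_range.1 hi))
    rw [hprod, symVec, ENNReal.mul_div_right_comm.symm, ENNReal.eq_div_iff two_ne_zero
      ENNReal.ofNat_ne_top]
    exact h2
  · rw [measure_cylinder_eq_zero (ae_admissible_symLift lam0) hw]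
    simp only [IsAdmissibleWord, not_forall] at hw
    obtain ⟨i, hi, hbad⟩ := hw
    rw [Finset.prod_eq_zero (Finset.mem_range.2 hi) (if_neg hbad), mul_zero]

end SymmetricLift

end DoubledShift

open DoubledShift

/-- **Lemma (unique symmetric Markov extension).** Every Markov measure `λ₀` on `Σ_N`
admits a unique symmetric Markov extension to `Σ_A`. -/
theorem unique_symmetric_markov_extension {N : ℕ} (part : Fin N → Bool)
    (lam0 : Measure (BSeq N)) [IsProbabilityMeasure lam0]
    (p0 : Fin N → ℝ≥0∞) (P0 : Fin N → Fin N → ℝ≥0∞)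
    (h0 : IsMarkov lam0 p0 P0) (h0s : IsStochastic p0 P0) :
    ∃! lam : Measure (ℤ → DSym N),
      ∃ (p : DSym N → ℝ≥0∞) (P : DSym N → DSym N → ℝ≥0∞),
        IsMarkov lam p P ∧ IsStochastic p P ∧ CompatA part P ∧ SymMarkov p P ∧
        lam.map (projSeq (N := N)) = lam0 := by
  refine ⟨symLift part lam0, ⟨symVec p0, symMatrix part P0, isMarkov_symLift lam0 h0,
    h0s.symVec_symMatrix, compatA_symMatrix P0, symMarkov_symVec_symMatrix p0 P0,
    map_projSeq_symLift lam0⟩, ?_⟩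
  rintro lam ⟨p, P, hM, -, hC, hS, hproj⟩
  have := isFiniteMeasure_of_map_projSeq hproj
  exact eq_of_map_projSeq_eq (hM.ae_admissible hC) (ae_admissible_symLift lam0)
    (hM.map_flipBit_comp hS) (map_flipBit_comp_symLift lam0)
    (hproj.trans (map_projSeq_symLift lam0).symm)
end
end
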